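/- arXiv:2405.05681 — 2 statements merged into one kernel-verified Lean document; each statement's English description precedes it below -/
import Mathlib

section
/- If g is a nondegenerate symmetric bilinear form on V, then the endomorphism 𝒥_g of E satisfies 𝒥_g ∘ 𝒥_g = -id_E and G₀(𝒥_g u, v) = G₀(u, 𝒥_g v) for all u, v ∈ E; in particular, if V ≠ 0 then 𝒥_g is not strong, i.e. it is not the case that G₀(𝒥_g u, v) = -G₀(u, 𝒥_g v) for all u, v ∈ E. -/
/-!
`𝒥_h ∘ 𝒥_h = -id` only uses `♯_h ∘ ♭_h = id` and `♭_h ∘ ♯_h = id`. For symmetric `g`, both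
`G₀(𝒥_g u, v)` and `G₀(u, 𝒥_g v)` equal `(g(X, Y) - g(♯ξ, ♯η)) / 2`. An endomorphism that is
both symmetric and skew for `G₀` has `G₀(𝒥_g u, v) = 0`, and on `u = (X, 0)`, `v = (Y, 0)`
this reads `g(X, Y) = 0`, so `g = 0`, impossible for a nondegenerate form on `V ≠ 0`.
-/

noncomputable section

variable {V : Type*} [AddCommGroup V] [Module ℝ V] [FiniteDimensional ℝ V]

/-- The canonical pairing `G₀` on `E = V × V*`. -/
def Gz (u v : V × Module.Dual ℝ V) : ℝ := (u.2 v.1 + v.2 u.1) / 2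

/-- The musical isomorphism `♯_h = (♭_h)⁻¹` of a nondegenerate bilinear form `h`. -/
def sharp (h : LinearMap.BilinForm ℝ V) (hh : h.Nondegenerate) : Module.Dual ℝ V →ₗ[ℝ] V :=
  (LinearMap.BilinForm.toDual h hh).symm

/-- The endomorphism `𝒥_h` of `E = V × V*`, `𝒥_h(X,ξ) = (-♯_h ξ, ♭_h X)`. -/
def Jform (h : LinearMap.BilinForm ℝ V) (hh : h.Nondegenerate)
    (u : V × Module.Dual ℝ V) : V × Module.Dual ℝ V :=
  (-(sharp h hh u.2), h u.1)

section Jform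

variable (h : LinearMap.BilinForm ℝ V) (hh : h.Nondegenerate)

@[simp]
lemma sharp_apply_self (X : V) : sharp h hh (h X) = X :=
  (LinearMap.BilinForm.toDual h hh).symm_apply_apply X

@[simp]
lemma apply_sharp (ξ : Module.Dual ℝ V) : h (sharp h hh ξ) = ξ :=
  (LinearMap.BilinForm.toDual h hh).apply_symm_apply ξ

lemma Jform_Jform (u : V × Module.Dual ℝ V) : Jform h hh (Jform h hh u) = -u := by
  simp [Jform, Prod.ext_iff]

lemma Gz_Jform_mk_zero (X Y : V) : Gz (Jform h hh (X, 0)) (Y, 0) = h X Y / 2 := by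
  simp [Gz, Jform]

lemma Gz_Jform_eq_Gz_Jform (hsym : ∀ X Y : V, h X Y = h Y X) (u v : V × Module.Dual ℝ V) :
    Gz (Jform h hh u) v = Gz u (Jform h hh v) := by
  have hsharp : v.2 (sharp h hh u.2) = u.2 (sharp h hh v.2) := by
    rw [← apply_sharp h hh v.2, ← apply_sharp h hh u.2, sharp_apply_self, sharp_apply_self,
      hsym]
  simp only [Gz, Jform, map_neg, hsharp, hsym u.1 v.1]
  ring

lemma not_forall_Gz_Jform_eq_neg [Nontrivial V] (hsym : ∀ X Y : V, h X Y = h Y X) :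
    ¬ ∀ u v : V × Module.Dual ℝ V, Gz (Jform h hh u) v = -Gz u (Jform h hh v) := by
  intro hskew
  have hvanish : ∀ u v, Gz (Jform h hh u) v = 0 := fun u v => by
    linarith [hskew u v, Gz_Jform_eq_Gz_Jform h hh hsym u v]
  refine hh.ne_zero (LinearMap.ext₂ fun X Y => ?_)
  simpa [Gz_Jform_mk_zero] using hvanish (X, 0) (Y, 0)

end Jform

/-- For a nondegenerate symmetric bilinear form `g`, the endomorphism `𝒥_g` squares to `-id`
and is symmetric with respect to `G₀`; in particular if `V ≠ 0` it is not strong. -/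
theorem Jform_symm_sq_and_not_strong (g : LinearMap.BilinForm ℝ V) (hg : g.Nondegenerate)
    (hsym : ∀ X Y : V, g X Y = g Y X) :
    (∀ u : V × Module.Dual ℝ V, Jform g hg (Jform g hg u) = -u) ∧
    (∀ u v : V × Module.Dual ℝ V, Gz (Jform g hg u) v = Gz u (Jform g hg v)) ∧
    (Nontrivial V →
      ¬ (∀ u v : V × Module.Dual ℝ V, Gz (Jform g hg u) v = -Gz u (Jform g hg v))) :=
  ⟨Jform_Jform g hg, Gz_Jform_eq_Gz_Jform g hg hsym,
    fun _ => not_forall_Gz_Jform_eq_neg g hg hsym⟩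

end
end

section
/- Let U ⊆ ℝⁿ be open and let A^j_i, B^{ij}, D^i_j : U → ℝ (indices i, j ∈ {1,…,n}) be differentiable functions. Suppose that for all i, j, l the two identities hold on U: (3) Σ_k [ A^k_i ∂B^{jl}/∂x^k - B^{jk} ∂A^l_i/∂x^k - A^l_k ∂B^{jk}/∂x^i - B^{kl} ( ∂A^j_i/∂x^k + ∂D^j_k/∂x^i ) ] = 0, and (5) Σ_k [ B^{ik} ∂A^l_j/∂x^k - A^k_j ∂B^{il}/∂x^k + A^l_k ∂B^{ik}/∂x^j + B^{kl} ( ∂D^i_k/∂x^j - ∂D^i_j/∂x^k ) ] = 0. Then for all i, j, l one has Σ_k B^{kl} ( ∂A^j_i/∂x^k + ∂D^j_i/∂x^k ) = 0 on U. -/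
noncomputable section

/-- The `k`-th partial derivative of a function `f : ℝⁿ → ℝ` at a point `x`. -/
def pder {n : ℕ} (k : Fin n) (f : (Fin n → ℝ) → ℝ) (x : Fin n → ℝ) : ℝ :=
  fderiv ℝ f x (Pi.single k 1)

/-- Adding up the local integrability conditions (3) and (5) (with the indices `i, j`
interchanged in (5)) yields `Σ_k B^{kl} (∂A^j_i/∂x^k + ∂D^j_i/∂x^k) = 0`.
Here `A i j`, `B i j`, `D i j` stand for `A^i_j`, `B^{ij}`, `D^i_j` respectively. -/
theorem integrability_conditions_combination {n : ℕ} (U : Set (Fin n → ℝ)) (hU : IsOpen U)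
    (A B D : Fin n → Fin n → (Fin n → ℝ) → ℝ)
    (hA : ∀ i j : Fin n, ∀ x ∈ U, DifferentiableAt ℝ (A i j) x)
    (hB : ∀ i j : Fin n, ∀ x ∈ U, DifferentiableAt ℝ (B i j) x)
    (hD : ∀ i j : Fin n, ∀ x ∈ U, DifferentiableAt ℝ (D i j) x)
    (h3 : ∀ i j l : Fin n, ∀ x ∈ U,
      ∑ k : Fin n, (A k i x * pder k (B j l) x - B j k x * pder k (A l i) x
        - A l k x * pder i (B j k) x
        - B k l x * (pder k (A j i) x + pder i (D j k) x)) = 0)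
    (h5 : ∀ i j l : Fin n, ∀ x ∈ U,
      ∑ k : Fin n, (B i k x * pder k (A l j) x - A k j x * pder k (B i l) x
        + A l k x * pder j (B i k) x
        + B k l x * (pder j (D i k) x - pder k (D i j) x)) = 0) :
    ∀ i j l : Fin n, ∀ x ∈ U,
      ∑ k : Fin n, B k l x * (pder k (A j i) x + pder k (D j i) x) = 0 := by
  intro i j l x hx
  have h := h3 i j l x hx
  have h' := h5 j i l x hx
  have key : ∑ k : Fin n,
      ((A k i x * pder k (B j l) x - B j k x * pder k (A l i) x
        - A l k x * pder i (B j k) x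
        - B k l x * (pder k (A j i) x + pder i (D j k) x))
      + (B j k x * pder k (A l i) x - A k i x * pder k (B j l) x
        + A l k x * pder i (B j k) x
        + B k l x * (pder i (D j k) x - pder k (D j i) x))) = 0 := by
    rw [Finset.sum_add_distrib, h, h', add_zero]
  have : ∑ k : Fin n, -(B k l x * (pder k (A j i) x + pder k (D j i) x)) = 0 := by
    rw [← key]
    exact Finset.sum_congr rfl fun k _ => by ring
  simpa [Finset.sum_neg_distrib, neg_eq_zero] using this

end
end
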